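/- arXiv:0909.3137 — 2 statements merged into one kernel-verified Lean document; each statement's English description precedes it below -/
import Mathlib

section
/- If P is an ε-net over S with respect to a Lipschitz function f (with ε < 1), then every point p in P has aspect ratio at most ε/(1−ε); that is, for all x in the restricted Voronoi cell of p, |px| ≤ (ε/(1−ε))·min_{q∈P, q≠p} |pq|. In particular, an ε-net is ε/(1−ε)-well-spaced. -/
theorem le_div_one_sub_mul_of_le_mul_add {a b ε : ℝ} (hε1 : ε < 1) (h : a ≤ ε * (b + a)) :
    a ≤ ε / (1 - ε) * b := by
  rw [div_mul_eq_mul_div, le_div_iff₀ (sub_pos.mpr hε1)]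
  linarith

/-- An ε-net (ε < 1) over S with respect to a Lipschitz function f is
ε/(1−ε)-well-spaced: every point p of P and every x in the restricted Voronoi cell
of p satisfy |px| ≤ (ε/(1−ε))·min_{q∈P, q≠p} |pq|. -/
theorem epsNet_wellSpaced {d : ℕ} (S : Set (EuclideanSpace ℝ (Fin d)))
    (P : Finset (EuclideanSpace ℝ (Fin d))) (f : EuclideanSpace ℝ (Fin d) → ℝ)
    (ε : ℝ) (hε0 : 0 ≤ ε) (hε1 : ε < 1)
    (hPS : ∀ p ∈ P, (p : EuclideanSpace ℝ (Fin d)) ∈ S)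
    (hLip : ∀ x ∈ S, ∀ y ∈ S, f x ≤ f y + dist x y)
    (hcover : ∀ x ∈ S, ∃ p ∈ P, dist p x ≤ ε * f x)
    (hpack : ∀ p ∈ P, ∀ q ∈ P, q ≠ p → f p ≤ dist p q) :
    ∀ p ∈ P, ∀ x ∈ S, (∀ q ∈ P, dist p x ≤ dist q x) →
      ∀ q ∈ P, q ≠ p → dist p x ≤ (ε / (1 - ε)) * dist p q := by
  intro p hp x hx hvor q hq hqp
  obtain ⟨r, hr, hrx⟩ := hcover x hx
  have hpx : dist p x ≤ ε * f x := (hvor r hr).trans hrx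
  have hfx : f x ≤ dist p q + dist p x := by
    linarith [hLip x hx p (hPS p hp), hpack p hp q hq hqp, dist_comm x p]
  exact le_div_one_sub_mul_of_le_mul_add hε1 (hpx.trans (mul_le_mul_of_nonneg_left hfx hε0))
end

section
/- Range property of Morton order: for a dyadic cube C of side 2^h with minimum corner c (all low h bits of each coordinate of c are zero), a point p lies in C if and only if Morton(c) ≤ Morton(p) ≤ Morton(c + (2^h−1,…,2^h−1)). Hence the points of C form a contiguous range in any array sorted by Morton number. -/
/-!
Splitting the interleaved bits at level `h` gives `morton (h + v) d q = L q + 2^(h d) * H q`, where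
`L q = morton h d q < 2^(h d)` reads the low `h` bits of `q` and `H q = morton v d (q / 2^h)` the
high ones. For the corner `c` of the cube `L c = 0`, while all low bits of `c + (2^h - 1)` are set,
so `L p ≤ L (c + (2^h - 1))` for every `p`, and both corners share the high part `H c`. Hence the
Morton window between the corners is the block of numbers with quotient `H c` by `2^(h d)`, so `p`
lies in it iff `H p = H c`. Morton numbers are injective (every bit of every coordinate is read back
from one bit of the number), so this says `p / 2^h = c / 2^h` coordinatewise, which is membership
in the cube.
-/

open Finset

/-- The Morton (Z-order) number of a point p ∈ {0,…,2^w−1}^d. -/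
def morton (w d : ℕ) (p : Fin d → ℕ) : ℕ :=
  ∑ j ∈ Finset.range w, ∑ i : Fin d,
    (Nat.testBit (p i) j).toNat * 2 ^ (j * d + (d - 1 - (i : ℕ)))

def mortonBitPos (d : ℕ) (x : ℕ × Fin d) : ℕ := x.1 * d + (d - 1 - x.2)

lemma mortonBitPos_injective (d : ℕ) : Function.Injective (mortonBitPos d) := by
  have decode : ∀ (j : ℕ) (i : Fin d),
      mortonBitPos d (j, i) / d = j ∧ mortonBitPos d (j, i) % d = d - 1 - i := fun j i =>
    (Nat.div_mod_unique i.pos).2 ⟨by rw [mortonBitPos, mul_comm, add_comm], by omega⟩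
  rintro ⟨j, i⟩ ⟨j', i'⟩ h
  obtain ⟨hj, hi⟩ := decode j i
  obtain ⟨hj', hi'⟩ := decode j' i'
  rw [h] at hj hi
  have := i.isLt
  have := i'.isLt
  simp only [Prod.mk.injEq, Fin.ext_iff]
  omega

lemma mortonBitPos_lt {w d j : ℕ} (hj : j < w) (i : Fin d) : mortonBitPos d (j, i) < w * d :=
  calc j * d + (d - 1 - i) < (j + 1) * d := by rw [add_mul, one_mul]; have := i.isLt; omega
    _ ≤ w * d := Nat.mul_le_mul_right d hj

def mortonBits (w d : ℕ) (p : Fin d → ℕ) : Finset ℕ :=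
  {x ∈ range w ×ˢ (univ : Finset (Fin d)) | (p x.2).testBit x.1}.map
    ⟨mortonBitPos d, mortonBitPos_injective d⟩

lemma morton_eq_sum_mortonBits (w d : ℕ) (p : Fin d → ℕ) :
    morton w d p = ∑ k ∈ mortonBits w d p, 2 ^ k := by
  rw [mortonBits, sum_map, sum_filter, morton, ← sum_product']
  refine sum_congr rfl fun x _ => ?_
  cases (p x.2).testBit x.1 <;> simp [mortonBitPos]

lemma mem_mortonBits {w d j : ℕ} (hj : j < w) (p : Fin d → ℕ) (i : Fin d) :
    mortonBitPos d (j, i) ∈ mortonBits w d p ↔ (p i).testBit j := by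
  simp [mortonBits, hj]

lemma morton_lt (w d : ℕ) (p : Fin d → ℕ) : morton w d p < 2 ^ (w * d) := by
  rw [morton_eq_sum_mortonBits]
  refine Nat.geomSum_lt le_rfl fun k hk => ?_
  simp only [mortonBits, mem_map, mem_filter, mem_product, mem_range] at hk
  obtain ⟨⟨j, i⟩, ⟨⟨hj, -⟩, -⟩, rfl⟩ := hk
  exact mortonBitPos_lt hj i

lemma morton_inj {w d : ℕ} {p q : Fin d → ℕ} (hp : ∀ i, p i < 2 ^ w) (hq : ∀ i, q i < 2 ^ w) :
    morton w d p = morton w d q ↔ p = q := by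
  refine ⟨fun h => funext fun i => Nat.eq_of_testBit_eq fun j => ?_, congrArg _⟩
  rcases lt_or_ge j w with hj | hj
  · have hbits : mortonBits w d p = mortonBits w d q := by
      rw [morton_eq_sum_mortonBits, morton_eq_sum_mortonBits] at h
      exact geomSum_injective le_rfl h
    rw [Bool.eq_iff_iff, ← mem_mortonBits hj, hbits, mem_mortonBits hj]
  · have hw : 2 ^ w ≤ 2 ^ j := Nat.pow_le_pow_right two_pos hj
    rw [Nat.testBit_lt_two_pow ((hp i).trans_le hw), Nat.testBit_lt_two_pow ((hq i).trans_le hw)]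

lemma morton_add (h v d : ℕ) (p : Fin d → ℕ) :
    morton (h + v) d p = morton h d p + 2 ^ (h * d) * morton v d (fun i => p i / 2 ^ h) := by
  unfold morton
  rw [sum_range_add, mul_sum]
  refine congrArg _ (sum_congr rfl fun j _ => ?_)
  rw [mul_sum]
  refine sum_congr rfl fun i _ => ?_
  dsimp only
  rw [← Nat.shiftRight_eq_div_pow, Nat.testBit_shiftRight, mul_left_comm, ← pow_add]
  congr 2
  ring

lemma morton_le_morton_of_testBit_le {w d : ℕ} {p q : Fin d → ℕ}
    (h : ∀ i, ∀ j < w, (p i).testBit j ≤ (q i).testBit j) : morton w d p ≤ morton w d q :=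
  sum_le_sum fun j hj => sum_le_sum fun i _ =>
    Nat.mul_le_mul_right _ (Bool.toNat_le_toNat (h i j (mem_range.mp hj)))

lemma morton_eq_zero_of_two_pow_dvd {w d : ℕ} {c : Fin d → ℕ} (hc : ∀ i, 2 ^ w ∣ c i) :
    morton w d c = 0 :=
  sum_eq_zero fun j hj => sum_eq_zero fun i _ => by
    obtain ⟨m, hm⟩ := hc i
    simp [hm, Nat.testBit_two_pow_mul, mem_range.mp hj]

lemma morton_le_morton_add_two_pow_sub_one {w d : ℕ} {c : Fin d → ℕ} (hc : ∀ i, 2 ^ w ∣ c i)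
    (p : Fin d → ℕ) : morton w d p ≤ morton w d (fun i => c i + (2 ^ w - 1)) := by
  refine morton_le_morton_of_testBit_le fun i j hj => ?_
  obtain ⟨m, hm⟩ := hc i
  rw [hm, Nat.testBit_two_pow_mul_add m (Nat.sub_lt (Nat.two_pow_pos w) one_pos), if_pos hj,
    Nat.testBit_two_pow_sub_one, decide_eq_true hj]
  exact Bool.le_true _

lemma le_and_le_add_sub_one_iff_div_eq {k c p : ℕ} (hk : 0 < k) (hc : k ∣ c) :
    c ≤ p ∧ p ≤ c + (k - 1) ↔ p / k = c / k := by
  obtain ⟨m, rfl⟩ := hc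
  rw [Nat.mul_div_cancel_left m hk, Nat.div_eq_iff hk, mul_comm m k]
  omega

lemma mul_le_add_mul_and_add_mul_le_iff {N a a' b b' : ℕ} (ha : a ≤ a') (ha' : a' < N) :
    N * b ≤ a + N * b' ∧ a + N * b' ≤ a' + N * b ↔ b' = b := by
  refine ⟨fun ⟨h₁, h₂⟩ => ?_, by rintro rfl; omega⟩
  have hN : 0 < N := by omega
  have := Nat.div_eq_of_lt_le (k := b) (n := N) (m := a + N * b') (by linarith) (by linarith)
  rwa [Nat.add_mul_div_left _ _ hN, Nat.div_eq_of_lt (by omega), zero_add] at this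

/-- range property of Morton order. For a dyadic cube of side 2^h with
minimum corner c (each coordinate of c a multiple of 2^h), a point p ∈ {0,…,2^w−1}^d
lies in the cube iff Morton(c) ≤ Morton(p) ≤ Morton(c + (2^h−1,…,2^h−1)); hence the
cube's points form a contiguous range in Morton order. -/
theorem morton_range_property (w d h : ℕ) (hh : h ≤ w) (c p : Fin d → ℕ)
    (hcdiv : ∀ i, 2 ^ h ∣ c i) (hc : ∀ i, c i < 2 ^ w) (hp : ∀ i, p i < 2 ^ w) :
    (∀ i, c i ≤ p i ∧ p i ≤ c i + (2 ^ h - 1)) ↔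
      (morton w d c ≤ morton w d p ∧
        morton w d p ≤ morton w d (fun i => c i + (2 ^ h - 1))) := by
  obtain ⟨v, rfl⟩ := Nat.exists_eq_add_of_le hh
  have hk : 0 < 2 ^ h := Nat.two_pow_pos h
  have hcorner : (fun i => (c i + (2 ^ h - 1)) / 2 ^ h) = fun i => c i / 2 ^ h :=
    funext fun i =>
      (le_and_le_add_sub_one_iff_div_eq hk (hcdiv i)).1 ⟨Nat.le_add_right _ _, le_rfl⟩
  have hhigh : ∀ q : Fin d → ℕ, (∀ i, q i < 2 ^ (h + v)) → ∀ i, q i / 2 ^ h < 2 ^ v :=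
    fun q hq i => Nat.div_lt_of_lt_mul (by rw [← pow_add]; exact hq i)
  rw [morton_add h v d c, morton_add h v d p, morton_add h v d, hcorner,
    morton_eq_zero_of_two_pow_dvd hcdiv, zero_add,
    mul_le_add_mul_and_add_mul_le_iff (morton_le_morton_add_two_pow_sub_one hcdiv p)
      (morton_lt h d _), morton_inj (hhigh p hp) (hhigh c hc), funext_iff]
  exact forall_congr' fun i => le_and_le_add_sub_one_iff_div_eq hk (hcdiv i)
end
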